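/- For every integer m ≥ 1, the measure ν_m is a probability measure supported on E_m, and its logarithmic potential satisfies, for every z ∈ ℂ, ∫_ℂ log|x − z| dν_m(x) = (1/(mπ)) ∫_{−2}^{2} log|t − z^m| / √(4 − t²) dt; in other words, ν_m is the equilibrium measure of E_m, whose potential is (1/m)·G_{[−2,2]}(z^m) (the Green's function of the complement of [−2,2] evaluated at z^m, divided by m). -/

import Mathlib

open MeasureTheory

/-- The measure `λ_m` on the real interval `[0, 2^{1/m}]` with density
`t ↦ t^{m-1} / (π √(4 - t^{2m}))` with respect to Lebesgue measure. -/
noncomputable def lamMeas (m : ℕ) : Measure ℝ :=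
  (volume.restrict (Set.Icc (0 : ℝ) ((2 : ℝ) ^ ((1 : ℝ) / (m : ℝ))))).withDensity
    (fun t => ENNReal.ofReal (t ^ (m - 1) / (Real.pi * Real.sqrt (4 - t ^ (2 * m)))))

/-- The equilibrium measure `ν_m` of the star `E_m = {z : z^m ∈ [-2,2]}`:
`ν_m = Σ_{k=1}^{2m} (φ_k)_* λ_m` where `φ_k(t) = e^{iπk/m} t`. -/
noncomputable def nuMeas (m : ℕ) : Measure ℂ :=
  ∑ k ∈ Finset.Icc 1 (2 * m),
    Measure.map
      (fun t : ℝ => Complex.exp (Real.pi * (k : ℂ) * Complex.I / (m : ℂ)) * (t : ℂ))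
      (lamMeas m)


/-- The star `E_m = { z ∈ ℂ : z^m ∈ [-2, 2] }`. -/
def Estar (m : ℕ) : Set ℂ := { z : ℂ | ∃ x ∈ Set.Icc (-2 : ℝ) 2, (x : ℂ) = z ^ m }

open Set Real intervalIntegral
open scoped Interval

/-!
With `ζ = e^{iπ/m}`, `ν_m` is the sum of the images of `λ_m` under the rotations `t ↦ ζ^k t`,
and `∏_{k=1}^{2m} (ζ^k t - z) = t^{2m} - z^{2m}`. The potential of `ν_m` at `z` is therefore
`∫ log |(t^m)² - w²| dλ_m(t)` with `w = z^m`. The substitution `u = t^m` turns `λ_m` into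
`du / (mπ √(4 - u²))` on `(0, 2)`, and `log |u² - w²| = log |u - w| + log |-u - w|` unfolds the
integral over `(0, 2)` into the one over `(-2, 2)`.

For integrability, `u = 2 cos θ` turns `du / √(4 - u²)` into `dθ`, and `log |2 cos θ - w|` is the
logarithm of the modulus of an analytic function. Each single term `log |ζ^k t - z|` is bounded
above on the support of `λ_m`, so it is integrable because the sum over `k` is.
-/

lemma IsPrimitiveRoot.prod_Icc_sub_pow_mul {R : Type*} [CommRing R] [IsDomain R] {ζ : R} {n : ℕ}
    (hζ : IsPrimitiveRoot ζ n) (hn : 0 < n) (x y : R) :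
    ∏ k ∈ Finset.Icc 1 n, (x - ζ ^ k * y) = x ^ n - y ^ n := by
  classical
  have hroots : (Finset.range n).image (ζ ^ ·) = Polynomial.nthRootsFinset n (1 : R) :=
    Finset.eq_of_subset_of_card_le
      (Finset.image_subset_iff.2 fun k _ ↦ (Polynomial.mem_nthRootsFinset hn 1).2 <| by
        rw [← pow_mul, mul_comm, pow_mul, hζ.pow_eq_one, one_pow])
      (by rw [hζ.card_nthRootsFinset, Finset.card_image_of_injOn hζ.injOn_pow, Finset.card_range])
  have hshift : ∏ k ∈ Finset.Icc 1 n, (x - ζ ^ k * y) =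
      ∏ k ∈ Finset.range n, (x - ζ ^ (k + 1) * y) := by
    rw [Finset.range_eq_Ico, Finset.prod_Ico_add' (fun k ↦ x - ζ ^ k * y) 0 n 1,
      ← Finset.Ico_succ_right_eq_Icc]
    rfl
  obtain ⟨n, rfl⟩ := Nat.exists_eq_add_one_of_ne_zero hn.ne'
  rw [hζ.pow_sub_pow_eq_prod_sub_mul x y hn, ← hroots, Finset.prod_image hζ.injOn_pow,
    Finset.prod_range_succ', hshift, Finset.prod_range_succ, hζ.pow_eq_one, pow_zero]

lemma prod_Icc_sub_exp_mul {m : ℕ} (hm : m ≠ 0) (x y : ℂ) :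
    ∏ k ∈ Finset.Icc 1 (2 * m), (x - Complex.exp (π * k * Complex.I / m) * y)
      = x ^ (2 * m) - y ^ (2 * m) := by
  have hζ := Complex.isPrimitiveRoot_exp (2 * m) (by omega)
  convert hζ.prod_Icc_sub_pow_mul (by omega) x y using 3 with k
  rw [← Complex.exp_nat_mul]
  push_cast
  field_simp

lemma sum_log_norm_exp_mul_sub {m : ℕ} (hm : m ≠ 0) {z : ℂ} {t : ℝ}
    (ht : ∀ k ∈ Finset.Icc 1 (2 * m), Complex.exp (π * k * Complex.I / m) * t ≠ z) :
    ∑ k ∈ Finset.Icc 1 (2 * m), log ‖Complex.exp (π * k * Complex.I / m) * t - z‖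
      = log ‖((t ^ m : ℝ) : ℂ) ^ 2 - (z ^ m) ^ 2‖ := by
  simp_rw [norm_sub_rev _ z]
  rw [← log_prod fun k hk ↦ norm_ne_zero_iff.2 (sub_ne_zero.2 (ht k hk).symm), ← norm_prod,
    prod_Icc_sub_exp_mul hm, norm_sub_rev]
  push_cast
  rw [← pow_mul, ← pow_mul, mul_comm m 2]

lemma MeasureTheory.Integrable.of_integrable_sum_of_ae_le {α ι : Type*} [MeasurableSpace α]
    {μ : Measure α} [IsFiniteMeasure μ] {s : Finset ι} {f : ι → α → ℝ} {C : ℝ}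
    (hmeas : ∀ i ∈ s, AEStronglyMeasurable (f i) μ) (hle : ∀ i ∈ s, ∀ᵐ x ∂μ, f i x ≤ C)
    (hsum : Integrable (fun x ↦ ∑ i ∈ s, f i x) μ) {i : ι} (hi : i ∈ s) :
    Integrable (f i) μ := by
  classical
  refine (hsum.abs.add (integrable_const (s.card * |C|))).mono' (hmeas i hi) ?_
  filter_upwards [(Filter.eventually_all_finset s).2 hle] with x hx
  -- the other summands are bounded above, so `f i x` is bounded below by the sum
  have hrest : ∑ j ∈ s.erase i, f j x ≤ s.card * |C| :=
    calc ∑ j ∈ s.erase i, f j x ≤ ∑ j ∈ s.erase i, |C| :=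
          Finset.sum_le_sum fun j hj ↦ (hx j (Finset.mem_of_mem_erase hj)).trans (le_abs_self C)
      _ ≤ s.card * |C| := by
          rw [Finset.sum_const, nsmul_eq_mul]
          exact mul_le_mul_of_nonneg_right (by exact_mod_cast Finset.card_erase_le) (abs_nonneg C)
  have hsplit := Finset.add_sum_erase s (f · x) hi
  have hcard : (1 : ℝ) ≤ s.card := by exact_mod_cast Finset.card_pos.2 ⟨i, hi⟩
  have hC : |C| ≤ s.card * |C| := le_mul_of_one_le_left (abs_nonneg C) hcard
  rw [Real.norm_eq_abs, abs_le, Pi.add_apply]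
  constructor
  · linarith [neg_abs_le (∑ j ∈ s, f j x)]
  · linarith [hx i hi, le_abs_self C, abs_nonneg (∑ j ∈ s, f j x)]

lemma MeasureTheory.integral_sum_map_mul_ofReal {ι : Type*} {μ : Measure ℝ} (s : Finset ι)
    (c : ι → ℂ) {g : ℂ → ℝ} (hg : Measurable g)
    (hint : ∀ k ∈ s, Integrable (fun t : ℝ ↦ g (c k * t)) μ) :
    ∫ x, g x ∂(∑ k ∈ s, μ.map fun t : ℝ ↦ c k * t) = ∫ t, ∑ k ∈ s, g (c k * t) ∂μ := by
  rw [integral_finsetSum_measure fun k hk ↦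
      (integrable_map_measure hg.aestronglyMeasurable (by fun_prop)).2 (hint k hk),
    integral_finsetSum s hint]
  exact Finset.sum_congr rfl fun k _ ↦ integral_map (by fun_prop) hg.aestronglyMeasurable

lemma zero_mem_uIcc_neg_self (a : ℝ) : (0 : ℝ) ∈ [[-a, a]] := by
  rcases le_total 0 a with h | h <;> simp [h]

lemma IntervalIntegrable.add_comp_neg {E : Type*} [NormedAddCommGroup E] {f : ℝ → E} {a : ℝ}
    (hf : IntervalIntegrable f volume (-a) a) :
    IntervalIntegrable (fun x ↦ f x + f (-x)) volume 0 a := by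
  refine (hf.mono_set (uIcc_subset_uIcc (zero_mem_uIcc_neg_self a) right_mem_uIcc)).add ?_
  simpa using (IntervalIntegrable.iff_comp_neg (by simp)).1
    (hf.mono_set (uIcc_subset_uIcc left_mem_uIcc (zero_mem_uIcc_neg_self a))).symm

lemma intervalIntegral.integral_add_comp_neg {E : Type*} [NormedAddCommGroup E] [NormedSpace ℝ E]
    {f : ℝ → E} {a : ℝ} (hf : IntervalIntegrable f volume (-a) a) :
    ∫ x in 0..a, (f x + f (-x)) = ∫ x in -a..a, f x := by
  have hright := hf.mono_set (uIcc_subset_uIcc (zero_mem_uIcc_neg_self a) right_mem_uIcc)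
  have hleft := hf.mono_set (uIcc_subset_uIcc left_mem_uIcc (zero_mem_uIcc_neg_self a))
  rw [integral_add hright (by simpa using hf.add_comp_neg.sub hright), integral_comp_neg,
    neg_zero, add_comm, integral_add_adjacent_intervals hleft hright]

lemma image_two_mul_cos_Ioo : (fun θ ↦ 2 * cos θ) '' Ioo 0 π = Ioo (-2) 2 := by
  have h : cos '' Ioo 0 π = Ioo (-1) 1 := cosPartialHomeomorph.image_source_eq_target
  rw [← image_image (2 * ·) cos, h, image_mul_left_Ioo two_pos]
  norm_num

lemma injOn_two_mul_cos : InjOn (fun θ ↦ 2 * cos θ) (Ioo 0 π) := fun _ hx _ hy h ↦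
  injOn_cos (Ioo_subset_Icc_self hx) (Ioo_subset_Icc_self hy) (by simpa using h)

lemma hasDerivWithinAt_two_mul_cos (θ : ℝ) (s : Set ℝ) :
    HasDerivWithinAt (fun θ ↦ 2 * cos θ) (2 * -sin θ) s θ :=
  ((hasDerivAt_cos θ).const_mul 2).hasDerivWithinAt

lemma abs_deriv_two_mul_cos_smul {θ : ℝ} (hθ : θ ∈ Ioo 0 π) (y : ℝ) :
    |2 * -sin θ| • (y / √(4 - (2 * cos θ) ^ 2)) = y := by
  have hsin : 0 < sin θ := sin_pos_of_pos_of_lt_pi hθ.1 hθ.2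
  have hsqrt : √(4 - (2 * cos θ) ^ 2) = 2 * sin θ := by
    rw [show 4 - (2 * cos θ) ^ 2 = (2 * sin θ) ^ 2 by nlinarith [sin_sq_add_cos_sq θ],
      sqrt_sq (by positivity)]
  rw [hsqrt, smul_eq_mul, abs_of_neg (by linarith)]
  field_simp

lemma integral_div_sqrt_four_sub_sq (g : ℝ → ℝ) :
    ∫ u in -2..2, g u / √(4 - u ^ 2) = ∫ θ in 0..π, g (2 * cos θ) := by
  rw [integral_of_le (by norm_num), integral_of_le pi_pos.le, integral_Ioc_eq_integral_Ioo,
    integral_Ioc_eq_integral_Ioo, ← image_two_mul_cos_Ioo,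
    integral_image_eq_integral_abs_deriv_smul measurableSet_Ioo
      (fun θ _ ↦ hasDerivWithinAt_two_mul_cos θ _) injOn_two_mul_cos]
  exact setIntegral_congr_fun measurableSet_Ioo fun θ hθ ↦ abs_deriv_two_mul_cos_smul hθ _

lemma intervalIntegrable_div_sqrt_four_sub_sq_iff (g : ℝ → ℝ) :
    IntervalIntegrable (fun u ↦ g u / √(4 - u ^ 2)) volume (-2) 2 ↔
      IntervalIntegrable (fun θ ↦ g (2 * cos θ)) volume 0 π := by
  rw [intervalIntegrable_iff_integrableOn_Ioo_of_le (by norm_num),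
    intervalIntegrable_iff_integrableOn_Ioo_of_le pi_pos.le, ← image_two_mul_cos_Ioo,
    integrableOn_image_iff_integrableOn_abs_deriv_smul measurableSet_Ioo
      (fun θ _ ↦ hasDerivWithinAt_two_mul_cos θ _) injOn_two_mul_cos]
  exact integrableOn_congr_fun (fun θ hθ ↦ abs_deriv_two_mul_cos_smul hθ _) measurableSet_Ioo

lemma integral_zero_two_one_div_sqrt_four_sub_sq : ∫ u in 0..2, 1 / √(4 - u ^ 2) = π / 2 := by
  have h := integral_add_comp_neg (a := 2) (f := fun u ↦ 1 / √(4 - u ^ 2))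
    ((intervalIntegrable_div_sqrt_four_sub_sq_iff 1).2 intervalIntegrable_const)
  have hπ : ∫ u in -2..2, 1 / √(4 - u ^ 2) = π := by
    simpa using integral_div_sqrt_four_sub_sq fun _ ↦ 1
  simp only [neg_sq, ← two_mul, intervalIntegral.integral_const_mul, hπ] at h
  linarith

lemma intervalIntegrable_log_norm_sub_div_sqrt (w : ℂ) :
    IntervalIntegrable (fun u : ℝ ↦ log ‖(u : ℂ) - w‖ / √(4 - u ^ 2)) volume (-2) 2 := by
  rw [intervalIntegrable_div_sqrt_four_sub_sq_iff (fun u ↦ log ‖(u : ℂ) - w‖)]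
  have hf : AnalyticOnNhd ℝ (fun θ : ℝ ↦ ((2 * cos θ : ℝ) : ℂ) - w) [[0, π]] := fun _ _ ↦
    ((Complex.ofRealCLM.analyticAt _).comp (analyticAt_const.mul analyticAt_cos)).sub
      analyticAt_const
  exact hf.meromorphicOn.intervalIntegrable_log_norm

lemma log_norm_sq_sub_sq_div_sqrt_ae_eq (w : ℂ) :
    (fun u : ℝ ↦ log ‖(u : ℂ) ^ 2 - w ^ 2‖ / √(4 - u ^ 2)) =ᵐ[volume]
      fun u ↦ log ‖(u : ℂ) - w‖ / √(4 - u ^ 2) + log ‖((-u : ℝ) : ℂ) - w‖ / √(4 - (-u) ^ 2) := by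
  filter_upwards [Measure.ae_ne volume w.re, Measure.ae_ne volume (-w.re)] with u h₁ h₂
  have hne₁ : (u : ℂ) - w ≠ 0 := fun h ↦ h₁ (by simpa using congrArg Complex.re (sub_eq_zero.1 h))
  have hne₂ : ((-u : ℝ) : ℂ) - w ≠ 0 := fun h ↦
    h₂ (by linarith [show -u = w.re by simpa using congrArg Complex.re (sub_eq_zero.1 h)])
  rw [show (u : ℂ) ^ 2 - w ^ 2 = ((u : ℂ) - w) * -(((-u : ℝ) : ℂ) - w) by push_cast; ring,
    norm_mul, norm_neg, log_mul (norm_ne_zero_iff.2 hne₁) (norm_ne_zero_iff.2 hne₂), neg_sq,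
    add_div]

lemma integral_log_norm_sq_sub_sq_div_sqrt (w : ℂ) :
    ∫ u in 0..2, log ‖(u : ℂ) ^ 2 - w ^ 2‖ / √(4 - u ^ 2)
      = ∫ u in -2..2, log ‖(u : ℂ) - w‖ / √(4 - u ^ 2) := by
  rw [← integral_add_comp_neg (intervalIntegrable_log_norm_sub_div_sqrt w)]
  exact integral_congr_ae ((log_norm_sq_sub_sq_div_sqrt_ae_eq w).mono fun _ h _ ↦ h)

lemma intervalIntegrable_log_norm_sq_sub_sq_div_sqrt (w : ℂ) :
    IntervalIntegrable (fun u : ℝ ↦ log ‖(u : ℂ) ^ 2 - w ^ 2‖ / √(4 - u ^ 2)) volume 0 2 :=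
  (intervalIntegrable_log_norm_sub_div_sqrt w).add_comp_neg.congr_ae
    (ae_restrict_of_ae (log_norm_sq_sub_sq_div_sqrt_ae_eq w).symm)

lemma image_pow_Ioo_zero {m : ℕ} (hm : m ≠ 0) {b : ℝ} (hb : 0 ≤ b) :
    (· ^ m) '' Ioo 0 b = Ioo 0 (b ^ m) := by
  refine Subset.antisymm ?_ ?_
  · rintro _ ⟨t, ht, rfl⟩
    exact ⟨pow_pos ht.1 m, pow_lt_pow_left₀ ht.2 ht.1.le hm⟩
  · simpa [zero_pow hm] using intermediate_value_Ioo hb (continuous_pow m).continuousOn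

lemma two_rpow_one_div_pow {m : ℕ} (hm : m ≠ 0) : ((2 : ℝ) ^ ((1 : ℝ) / m)) ^ m = 2 := by
  rw [one_div, rpow_inv_natCast_pow zero_le_two hm]

noncomputable def lamDensity (m : ℕ) (t : ℝ) : ℝ := t ^ (m - 1) / (π * √(4 - t ^ (2 * m)))

lemma lamMeas_eq_withDensity (m : ℕ) :
    lamMeas m = (volume.restrict (Icc 0 ((2 : ℝ) ^ ((1 : ℝ) / m)))).withDensity
      fun t ↦ ENNReal.ofReal (lamDensity m t) := rfl

lemma lamDensity_nonneg (m : ℕ) {t : ℝ} (ht : 0 ≤ t) : 0 ≤ lamDensity m t := by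
  unfold lamDensity; positivity

lemma measurable_lamDensity (m : ℕ) : Measurable (lamDensity m) := by
  unfold lamDensity; fun_prop

lemma integral_lamMeas (m : ℕ) (F : ℝ → ℝ) :
    ∫ t, F t ∂lamMeas m = ∫ t in Ioo 0 ((2 : ℝ) ^ ((1 : ℝ) / m)), lamDensity m t * F t := by
  rw [lamMeas_eq_withDensity, integral_withDensity_eq_integral_toReal_smul
    (measurable_lamDensity m).ennreal_ofReal (.of_forall fun _ ↦ ENNReal.ofReal_lt_top),
    integral_Icc_eq_integral_Ioo]
  exact setIntegral_congr_fun measurableSet_Ioo fun t ht ↦ by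
    rw [ENNReal.toReal_ofReal (lamDensity_nonneg m ht.1.le), smul_eq_mul]

lemma integrable_lamMeas_iff (m : ℕ) (F : ℝ → ℝ) :
    Integrable F (lamMeas m) ↔
      IntegrableOn (fun t ↦ lamDensity m t * F t) (Ioo 0 ((2 : ℝ) ^ ((1 : ℝ) / m))) := by
  rw [lamMeas_eq_withDensity, integrable_withDensity_iff (measurable_lamDensity m).ennreal_ofReal
    (.of_forall fun _ ↦ ENNReal.ofReal_lt_top), ← IntegrableOn,
    integrableOn_Icc_iff_integrableOn_Ioo]
  refine integrableOn_congr_fun (fun t ht ↦ ?_) measurableSet_Ioo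
  rw [ENNReal.toReal_ofReal (lamDensity_nonneg m ht.1.le), mul_comm]

lemma lamMeas_compl_Icc (m : ℕ) : lamMeas m (Icc 0 ((2 : ℝ) ^ ((1 : ℝ) / m)))ᶜ = 0 := by
  rw [lamMeas_eq_withDensity, withDensity_apply _ measurableSet_Icc.compl,
    Measure.restrict_restrict measurableSet_Icc.compl, compl_inter_self, Measure.restrict_empty,
    lintegral_zero_measure]

lemma abs_deriv_pow_smul (m : ℕ) {t : ℝ} (ht : 0 ≤ t) (y : ℝ) :
    |m * t ^ (m - 1)| • (y / √(4 - (t ^ m) ^ 2)) = m * π * (lamDensity m t * y) := by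
  rw [abs_of_nonneg (by positivity), smul_eq_mul, lamDensity, ← pow_mul, mul_comm m 2]
  field_simp

lemma image_pow_Ioo_two_rpow_one_div {m : ℕ} (hm : m ≠ 0) :
    (· ^ m) '' Ioo 0 ((2 : ℝ) ^ ((1 : ℝ) / m)) = Ioo 0 2 := by
  rw [image_pow_Ioo_zero hm (by positivity), two_rpow_one_div_pow hm]

lemma injOn_pow_Ioo_zero (m : ℕ) (hm : m ≠ 0) (b : ℝ) : InjOn (· ^ m) (Ioo (0 : ℝ) b) :=
  (pow_left_strictMonoOn₀ hm).injOn.mono fun _ ht ↦ ht.1.le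

lemma integral_lamMeas_comp_pow {m : ℕ} (hm : m ≠ 0) (G : ℝ → ℝ) :
    ∫ t, G (t ^ m) ∂lamMeas m = (m * π)⁻¹ * ∫ u in 0..2, G u / √(4 - u ^ 2) := by
  rw [integral_lamMeas, integral_of_le zero_le_two, integral_Ioc_eq_integral_Ioo,
    ← image_pow_Ioo_two_rpow_one_div hm,
    integral_image_eq_integral_abs_deriv_smul measurableSet_Ioo
      (fun t _ ↦ (hasDerivAt_pow m t).hasDerivWithinAt) (injOn_pow_Ioo_zero m hm _),
    setIntegral_congr_fun measurableSet_Ioo fun t ht ↦ abs_deriv_pow_smul m ht.1.le _,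
    MeasureTheory.integral_const_mul, inv_mul_cancel_left₀ (by positivity)]

lemma integrable_lamMeas_comp_pow {m : ℕ} (hm : m ≠ 0) {G : ℝ → ℝ}
    (hG : IntervalIntegrable (fun u ↦ G u / √(4 - u ^ 2)) volume 0 2) :
    Integrable (fun t ↦ G (t ^ m)) (lamMeas m) := by
  rw [intervalIntegrable_iff_integrableOn_Ioo_of_le zero_le_two,
    ← image_pow_Ioo_two_rpow_one_div hm,
    integrableOn_image_iff_integrableOn_abs_deriv_smul measurableSet_Ioo
      (fun t _ ↦ (hasDerivAt_pow m t).hasDerivWithinAt) (injOn_pow_Ioo_zero m hm _)] at hG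
  rw [integrable_lamMeas_iff, IntegrableOn]
  have := (hG.congr_fun (fun t ht ↦ abs_deriv_pow_smul m ht.1.le _) measurableSet_Ioo).const_mul
    (m * π)⁻¹
  simpa only [inv_mul_cancel_left₀ (by positivity : (m * π : ℝ) ≠ 0)] using this

lemma isFiniteMeasure_lamMeas {m : ℕ} (hm : m ≠ 0) : IsFiniteMeasure (lamMeas m) := by
  have h := integrable_lamMeas_comp_pow hm (G := fun _ ↦ 1)
    ((intervalIntegrable_div_sqrt_four_sub_sq_iff 1).2 intervalIntegrable_const |>.mono_set
      (uIcc_subset_uIcc (zero_mem_uIcc_neg_self 2) right_mem_uIcc))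
  exact (integrable_const_iff.1 h).resolve_left one_ne_zero

lemma lamMeas_univ {m : ℕ} (hm : m ≠ 0) : lamMeas m univ = ENNReal.ofReal (2 * m)⁻¹ := by
  have := isFiniteMeasure_lamMeas hm
  have h := integral_lamMeas_comp_pow hm fun _ ↦ 1
  rw [MeasureTheory.integral_const, smul_eq_mul, mul_one,
    integral_zero_two_one_div_sqrt_four_sub_sq] at h
  rw [← ofReal_measureReal, h]
  congr 1
  field_simp

lemma norm_exp_pi_mul_div (k m : ℕ) : ‖Complex.exp (π * k * Complex.I / m)‖ = 1 := by
  rw [show (π * k * Complex.I / m : ℂ) = ((π * k / m : ℝ) : ℂ) * Complex.I by push_cast; ring,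
    Complex.norm_exp_ofReal_mul_I]

lemma exp_pi_mul_div_pow (k : ℕ) {m : ℕ} (hm : m ≠ 0) :
    Complex.exp (π * k * Complex.I / m) ^ m = (-1) ^ k := by
  rw [← Complex.exp_nat_mul, show (m * (π * k * Complex.I / m) : ℂ) = k * (π * Complex.I) by
    field_simp, Complex.exp_nat_mul, Complex.exp_pi_mul_I]

lemma isClosed_Estar (m : ℕ) : IsClosed (Estar m) :=
  (isCompact_Icc.image Complex.continuous_ofReal).isClosed.preimage (continuous_pow m)

lemma exp_mul_ofReal_mem_Estar {m : ℕ} (hm : m ≠ 0) (k : ℕ) {t : ℝ}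
    (ht : t ∈ Icc 0 ((2 : ℝ) ^ ((1 : ℝ) / m))) :
    Complex.exp (π * k * Complex.I / m) * t ∈ Estar m := by
  have htm : t ^ m ≤ 2 := two_rpow_one_div_pow hm ▸ pow_le_pow_left₀ ht.1 ht.2 m
  refine ⟨(-1) ^ k * t ^ m, ?_, by rw [mul_pow, exp_pi_mul_div_pow k hm]; push_cast; rfl⟩
  have := pow_nonneg ht.1 m
  rcases neg_one_pow_eq_or ℝ k with h | h <;> rw [h] <;> constructor <;> linarith

lemma isProbabilityMeasure_nuMeas {m : ℕ} (hm : m ≠ 0) : IsProbabilityMeasure (nuMeas m) := by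
  constructor
  rw [nuMeas, Measure.finsetSum_apply]
  have hk (k : ℕ) : (lamMeas m).map (fun t : ℝ ↦ Complex.exp (π * k * Complex.I / m) * t) univ
      = ENNReal.ofReal (2 * m)⁻¹ := by
    rw [Measure.map_apply (by fun_prop) MeasurableSet.univ, preimage_univ, lamMeas_univ hm]
  simp_rw [hk, Finset.sum_const, Nat.card_Icc, Nat.add_sub_cancel, nsmul_eq_mul,
    ← ENNReal.ofReal_natCast, ← ENNReal.ofReal_mul (Nat.cast_nonneg _)]
  push_cast
  rw [mul_inv_cancel₀ (by positivity), ENNReal.ofReal_one]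

lemma nuMeas_compl_Estar {m : ℕ} (hm : m ≠ 0) : nuMeas m (Estar m)ᶜ = 0 := by
  rw [nuMeas, Measure.finsetSum_apply]
  refine Finset.sum_eq_zero fun k _ ↦ ?_
  rw [Measure.map_apply (by fun_prop) (isClosed_Estar m).measurableSet.compl]
  exact measure_mono_null (fun t ht hIcc ↦ ht (exp_mul_ofReal_mem_Estar hm k hIcc))
    (lamMeas_compl_Icc m)

lemma ae_mul_ofReal_ne {c : ℂ} (hc : c ≠ 0) (z : ℂ) : ∀ᵐ t : ℝ, c * t ≠ z :=
  (Measure.ae_ne volume (c⁻¹ * z).re).mono fun t ht h ↦ ht <| by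
    rw [← h, inv_mul_cancel_left₀ hc, Complex.ofReal_re]

lemma log_norm_mul_ofReal_sub_le {c : ℂ} (hc : ‖c‖ = 1) (z : ℂ) {t b : ℝ} (ht : t ∈ Icc 0 b) :
    log ‖c * t - z‖ ≤ b + ‖z‖ :=
  calc log ‖c * t - z‖ ≤ ‖c * t - z‖ := log_le_self (norm_nonneg _)
    _ ≤ ‖c * t‖ + ‖z‖ := norm_sub_le _ _
    _ ≤ b + ‖z‖ := by
      rw [norm_mul, hc, one_mul, Complex.norm_real, norm_of_nonneg ht.1]
      linarith [ht.2]

lemma absolutelyContinuous_lamMeas (m : ℕ) : lamMeas m ≪ volume :=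
  (withDensity_absolutelyContinuous _ _).trans
    (Measure.absolutelyContinuous_of_le Measure.restrict_le_self)

lemma ae_mem_Icc_lamMeas (m : ℕ) : ∀ᵐ t ∂lamMeas m, t ∈ Icc 0 ((2 : ℝ) ^ ((1 : ℝ) / m)) :=
  ae_iff.2 (lamMeas_compl_Icc m)

lemma integral_log_norm_sub_nuMeas {m : ℕ} (hm : m ≠ 0) (z : ℂ) :
    ∫ x, log ‖x - z‖ ∂nuMeas m =
      (m * π)⁻¹ * ∫ u in -2..2, log ‖(u : ℂ) - z ^ m‖ / √(4 - u ^ 2) := by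
  have := isFiniteMeasure_lamMeas hm
  have hmeas : Measurable fun x : ℂ ↦ log ‖x - z‖ := by fun_prop
  have hsum : ∀ᵐ t : ℝ ∂lamMeas m,
      ∑ k ∈ Finset.Icc 1 (2 * m), log ‖Complex.exp (π * k * Complex.I / m) * t - z‖
        = log ‖((t ^ m : ℝ) : ℂ) ^ 2 - (z ^ m) ^ 2‖ := by
    filter_upwards [absolutelyContinuous_lamMeas m <| (Filter.eventually_all_finset _).2
      fun k _ ↦ ae_mul_ofReal_ne (Complex.exp_ne_zero _) z] with t ht
    exact sum_log_norm_exp_mul_sub hm ht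
  have hint (k : ℕ) (hk : k ∈ Finset.Icc 1 (2 * m)) :
      Integrable (fun t : ℝ ↦ log ‖Complex.exp (π * k * Complex.I / m) * t - z‖) (lamMeas m) :=
    Integrable.of_integrable_sum_of_ae_le
      (fun _ _ ↦ (hmeas.comp (by fun_prop)).aestronglyMeasurable)
      (fun k _ ↦ (ae_mem_Icc_lamMeas m).mono fun _ ht ↦
        log_norm_mul_ofReal_sub_le (norm_exp_pi_mul_div k m) z ht)
      ((integrable_lamMeas_comp_pow hm
        (intervalIntegrable_log_norm_sq_sub_sq_div_sqrt (z ^ m))).congr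
          (hsum.mono fun _ h ↦ h.symm)) hk
  rw [nuMeas, integral_sum_map_mul_ofReal _ _ hmeas hint, integral_congr_ae hsum,
    integral_lamMeas_comp_pow hm fun u ↦ log ‖(u : ℂ) ^ 2 - (z ^ m) ^ 2‖,
    integral_log_norm_sq_sub_sq_div_sqrt]

/-- `ν_m` is the equilibrium measure of `E_m`: it is a probability measure
supported on `E_m`, and its logarithmic potential equals
`(1/m) G_{[-2,2]}(z^m)`, i.e. `(1/(mπ)) ∫_{-2}^{2} log|t - z^m|/√(4-t²) dt`. -/
theorem nuMeas_is_equilibrium (m : ℕ) (hm : 1 ≤ m) :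
    IsProbabilityMeasure (nuMeas m) ∧
    nuMeas m (Estar m)ᶜ = 0 ∧
    ∀ z : ℂ, (∫ x, Real.log ‖x - z‖ ∂(nuMeas m))
      = (1 / ((m : ℝ) * Real.pi)) *
          ∫ t in (-2 : ℝ)..2, Real.log ‖(t : ℂ) - z ^ m‖ / Real.sqrt (4 - t ^ 2) := by
  have hm₀ : m ≠ 0 := Nat.one_le_iff_ne_zero.1 hm
  refine ⟨isProbabilityMeasure_nuMeas hm₀, nuMeas_compl_Estar hm₀, fun z ↦ ?_⟩
  rw [integral_log_norm_sub_nuMeas hm₀, one_div]
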